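/- Let u_min, u_max, y0, α', α, T' be real numbers with 0 < u_min ≤ u_max, y0 < α' < α, and (α' − y0)/u_max ≤ T' ≤ (α' − y0)/u_min. Then T' + (α − α')/u_min is the greatest element of the set {t ∈ ℝ | there exists an admissible control u with y0 + ∫₀^{T'} u(s) ds = α' and y0 + ∫₀ᵗ u(s) ds = α}. (This is the deadline of a non-first conflict area, given that the preceding area is entered at the scheduled time T', under single-integrator dynamics.) -/

import Mathlib

/-!
Over `[0, T']` the vehicle must cover `α' - y0`, which the constant speed `(α' - y0) / T'`
does within the speed bounds exactly because `T'` lies in the admissible window. After `T'`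
it has `α - α'` left to cover at speed at least `umin`, which takes at most `(α - α') / umin`,
and driving at `umin` from `T'` on attains this bound.
-/

open MeasureTheory

/-- An admissible control for speed bounds `0 < umin ≤ umax`: a measurable
function with values in `[umin, umax]` at all nonnegative times. -/
def Admissible (umin umax : ℝ) (u : ℝ → ℝ) : Prop :=
  Measurable u ∧ ∀ s : ℝ, 0 ≤ s → umin ≤ u s ∧ u s ≤ umax

namespace Admissible

variable {umin umax : ℝ} {u : ℝ → ℝ}

theorem intervalIntegrable (hu : Admissible umin umax u) {a b : ℝ} (ha : 0 ≤ a) (hb : 0 ≤ b) :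
    IntervalIntegrable u volume a b := by
  refine IntegrableOn.intervalIntegrable <|
    Measure.integrableOn_of_bounded isCompact_uIcc.measure_lt_top.ne
      hu.1.aestronglyMeasurable (M := max |umin| |umax|) ?_
  refine ae_restrict_of_forall_mem measurableSet_uIcc fun s hs => ?_
  have hs₀ : 0 ≤ s := (le_min ha hb).trans hs.1
  exact abs_le_max_abs_abs (hu.2 s hs₀).1 (hu.2 s hs₀).2

theorem sub_mul_le_integral (hu : Admissible umin umax u) {a b : ℝ} (ha : 0 ≤ a)
    (hab : a ≤ b) :
    (b - a) * umin ≤ ∫ s in a..b, u s := by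
  simpa using intervalIntegral.integral_mono_on hab intervalIntegrable_const
    (hu.intervalIntegrable ha (ha.trans hab)) fun s hs => (hu.2 s (ha.trans hs.1)).1

end Admissible

noncomputable def twoPhaseControl (T v w : ℝ) (s : ℝ) : ℝ :=
  if s ≤ T then v else w

theorem admissible_twoPhaseControl {umin umax T v w : ℝ} (hv : v ∈ Set.Icc umin umax)
    (hw : w ∈ Set.Icc umin umax) : Admissible umin umax (twoPhaseControl T v w) := by
  refine ⟨Measurable.ite measurableSet_Iic measurable_const measurable_const, fun s _ => ?_⟩
  unfold twoPhaseControl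
  split_ifs
  exacts [hv, hw]

theorem integral_twoPhaseControl_first {T : ℝ} (hT : 0 ≤ T) (v w : ℝ) :
    ∫ s in (0 : ℝ)..T, twoPhaseControl T v w s = T * v := by
  rw [intervalIntegral.integral_congr (g := fun _ => v), intervalIntegral.integral_const,
    smul_eq_mul, sub_zero]
  intro s hs
  rw [Set.uIcc_of_le hT] at hs
  exact if_pos hs.2

theorem integral_twoPhaseControl_second {T t : ℝ} (hTt : T ≤ t) (v w : ℝ) :
    ∫ s in T..t, twoPhaseControl T v w s = (t - T) * w := by
  rw [intervalIntegral.integral_congr_ae (g := fun _ => w), intervalIntegral.integral_const,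
    smul_eq_mul]
  refine Filter.Eventually.of_forall fun s hs => ?_
  rw [Set.uIoc_of_le hTt] at hs
  exact if_neg (not_le.mpr hs.1)

theorem integral_twoPhaseControl {T t : ℝ} (hT : 0 ≤ T) (hTt : T ≤ t) (v w : ℝ) :
    ∫ s in (0 : ℝ)..t, twoPhaseControl T v w s = T * v + (t - T) * w := by
  have hu : Admissible (min v w) (max v w) (twoPhaseControl T v w) :=
    admissible_twoPhaseControl ⟨min_le_left v w, le_max_left v w⟩
      ⟨min_le_right v w, le_max_right v w⟩
  rw [← intervalIntegral.integral_add_adjacent_intervals (hu.intervalIntegrable le_rfl hT)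
    (hu.intervalIntegrable hT (hT.trans hTt)), integral_twoPhaseControl_first hT,
    integral_twoPhaseControl_second hTt]

/-- Deadline of a non-first conflict area: given that the preceding area
(at position `α'`) is entered at the scheduled time `T'`, the latest time
at which the vehicle can reach position `α` is `T' + (α - α')/umin`. -/
theorem deadline_nonfirst (umin umax y0 α' α T' : ℝ)
    (humin : 0 < umin) (hbound : umin ≤ umax)
    (h1 : y0 < α') (h2 : α' < α)
    (hT'l : (α' - y0) / umax ≤ T') (hT'u : T' ≤ (α' - y0) / umin) :
    IsGreatest {t : ℝ | ∃ u : ℝ → ℝ, Admissible umin umax u ∧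
        y0 + ∫ s in (0:ℝ)..T', u s = α' ∧
        y0 + ∫ s in (0:ℝ)..t, u s = α}
      (T' + (α - α') / umin) := by
  have hT' : 0 < T' := (div_pos (sub_pos.mpr h1) (humin.trans_le hbound)).trans_le hT'l
  have hlate : 0 < (α - α') / umin := div_pos (sub_pos.mpr h2) humin
  refine ⟨?_, ?_⟩
  · have hv : (α' - y0) / T' ∈ Set.Icc umin umax :=
      ⟨(le_div_comm₀ humin hT').mpr hT'u,
        (div_le_comm₀ (humin.trans_le hbound) hT').mp hT'l⟩
    refine ⟨twoPhaseControl T' ((α' - y0) / T') umin,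
      admissible_twoPhaseControl hv ⟨le_rfl, hbound⟩, ?_, ?_⟩
    · rw [integral_twoPhaseControl_first hT'.le]; field_simp; ring
    · rw [integral_twoPhaseControl hT'.le (le_add_of_nonneg_right hlate.le)]
      field_simp; ring
  · rintro t ⟨u, hu, hαT', hαt⟩
    rcases le_or_gt t T' with ht | ht
    · linarith
    have hrest : ∫ s in T'..t, u s = α - α' := by
      rw [← intervalIntegral.integral_interval_sub_left
        (hu.intervalIntegrable le_rfl (hT'.trans ht).le) (hu.intervalIntegrable le_rfl hT'.le)]
      linarith
    have hslow := hu.sub_mul_le_integral hT'.le ht.le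
    rw [hrest, ← le_div_iff₀ humin] at hslow
    linarith
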